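/- In the setting of Proposition 2 (previous statement), assume additionally that Σ_{mm'} = σ_{mm'} I for real scalars σ_{mm'} (m, m' ∈ {1,2}). Then E[‖y − ŷ‖²] − E[‖y − ŷ*‖²] = −p·σ₁₁ − p·σ₂₂ − 2σ₁₂·Tr(H₁H₂) − p·θ₁ᵀΣ_{W₁}θ₁ − p·θ₂ᵀΣ_{W₂}θ₂. -/

import Mathlib

open Matrix MeasureTheory ProbabilityTheory
open scoped BigOperators

/-!
Both hat matrices fix the columns of their own designs, so the residuals are `(I - H)(v₁ + v₂)`
and `(I - H₁)v₁ + (I - H₂)v₂`, where `v_m = W_m θ_m + ε_m`. Row independence, independence of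
the two designs and of designs and errors, and centring make this noise white:
`E[v_m v_{m'}ᵀ] = (σ_{mm'} + δ_{mm'} θ_mᵀ Σ_{W_m} θ_m) I`. For white noise
`E[(Qv)ᵀ(Sw)] = c Tr(QᵀS)`, and for symmetric `A`, `Tr((I - A)(I - B)) = n - Tr A - Tr B + Tr(AB)`,
which is evaluated with `Tr H = 2p`, `Tr H_m = p` and the idempotence of hat matrices.
-/

/-- The hat matrix `H_A = A (AᵀA)⁻¹ Aᵀ` of a design matrix `A`. -/
noncomputable def hatMat {n : ℕ} {q : Type*} [Fintype q] [DecidableEq q]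
    (A : Matrix (Fin n) q ℝ) : Matrix (Fin n) (Fin n) ℝ :=
  A * (Aᵀ * A)⁻¹ * Aᵀ

section LinearAlgebra

variable {ι κ ν R : Type*} [Fintype ι] [Fintype κ]

theorem mulVec_dotProduct_mulVec [CommSemiring R] [Fintype ν] (Q : Matrix ι κ R)
    (S : Matrix ι ν R) (v : κ → R) (w : ν → R) :
    Q *ᵥ v ⬝ᵥ S *ᵥ w = v ⬝ᵥ (Qᵀ * S) *ᵥ w := by
  rw [dotProduct_mulVec, dotProduct_mulVec, ← vecMul_transpose, vecMul_vecMul]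

theorem dotProduct_mulVec_eq_sum_sum [CommSemiring R] (v : ι → R) (A : Matrix ι κ R)
    (w : κ → R) : v ⬝ᵥ A *ᵥ w = ∑ j, ∑ k, A j k * (v j * w k) := by
  simp only [dotProduct, mulVec, Finset.mul_sum]
  exact Finset.sum_congr rfl fun j _ => Finset.sum_congr rfl fun k _ => by ring

theorem trace_one_sub_transpose_mul_one_sub [DecidableEq ι] [CommRing R] {A : Matrix ι ι R}
    (hA : Aᵀ = A) (B : Matrix ι ι R) :
    trace ((1 - A)ᵀ * (1 - B)) = Fintype.card ι - trace A - trace B + trace (A * B) := by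
  rw [transpose_sub, transpose_one, hA, sub_mul, mul_sub, mul_sub, one_mul, mul_one, one_mul,
    trace_sub, trace_sub, trace_sub, trace_one]
  ring

end LinearAlgebra

section HatMatrix

variable {n : ℕ} {q : Type*} [Fintype q] [DecidableEq q] {A : Matrix (Fin n) q ℝ}

theorem hatMat_transpose (A : Matrix (Fin n) q ℝ) : (hatMat A)ᵀ = hatMat A := by
  simp [hatMat, transpose_mul, transpose_nonsing_inv, Matrix.mul_assoc]

theorem hatMat_mul_self (h : IsUnit (Aᵀ * A)) : hatMat A * A = A := by
  simp only [hatMat, Matrix.mul_assoc]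
  rw [nonsing_inv_mul _ ((isUnit_iff_isUnit_det _).mp h), Matrix.mul_one]

theorem hatMat_mul_hatMat (h : IsUnit (Aᵀ * A)) : hatMat A * hatMat A = hatMat A := by
  calc hatMat A * hatMat A = hatMat A * A * (Aᵀ * A)⁻¹ * Aᵀ := by
        simp only [hatMat, Matrix.mul_assoc]
    _ = hatMat A := by rw [hatMat_mul_self h, hatMat]

theorem trace_hatMat (h : IsUnit (Aᵀ * A)) : trace (hatMat A) = Fintype.card q := by
  rw [hatMat, trace_mul_cycle, mul_nonsing_inv _ ((isUnit_iff_isUnit_det _).mp h), trace_one]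

theorem one_sub_hatMat_mulVec_add (h : IsUnit (Aᵀ * A)) (b : q → ℝ) (e : Fin n → ℝ) :
    (1 - hatMat A) *ᵥ (A *ᵥ b + e) = (1 - hatMat A) *ᵥ e := by
  rw [mulVec_add, mulVec_mulVec, Matrix.sub_mul, Matrix.one_mul, hatMat_mul_self h, sub_self,
    zero_mulVec, zero_add]

end HatMatrix

section SecondMoments

variable {Ω ι κ : Type*} [MeasurableSpace Ω] {P : Measure Ω} [Fintype ι] [Fintype κ]

-- Stated for the pointwise product (not `f * g`) so that it unifies in `integral_add`.
theorem integrable_mul_of_memLp_two {f g : Ω → ℝ} (hf : MemLp f 2 P) (hg : MemLp g 2 P) :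
    Integrable (fun ω => f ω * g ω) P :=
  hf.integrable_mul hg

theorem integral_add_mul_add {a b c d : Ω → ℝ} (ha : MemLp a 2 P) (hb : MemLp b 2 P)
    (hc : MemLp c 2 P) (hd : MemLp d 2 P) :
    ∫ ω, (a ω + b ω) * (c ω + d ω) ∂P
      = ∫ ω, a ω * c ω ∂P + ∫ ω, a ω * d ω ∂P + (∫ ω, b ω * c ω ∂P + ∫ ω, b ω * d ω ∂P) := by
  have hexpand : ∀ ω, (a ω + b ω) * (c ω + d ω) = a ω * c ω + a ω * d ω + (b ω * c ω + b ω * d ω) :=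
    fun ω => by ring
  have hac := integrable_mul_of_memLp_two ha hc
  have had := integrable_mul_of_memLp_two ha hd
  have hbc := integrable_mul_of_memLp_two hb hc
  have hbd := integrable_mul_of_memLp_two hb hd
  simp only [hexpand]
  rw [integral_add (f := fun ω => a ω * c ω + a ω * d ω) (g := fun ω => b ω * c ω + b ω * d ω)
    (hac.add had) (hbc.add hbd), integral_add hac had, integral_add hbc hbd]

theorem integrable_sum_sum_mul {v : Ω → ι → ℝ} {w : Ω → κ → ℝ}
    (hv : ∀ j, MemLp (fun ω => v ω j) 2 P) (hw : ∀ k, MemLp (fun ω => w ω k) 2 P)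
    (A : ι → κ → ℝ) : Integrable (fun ω => ∑ j, ∑ k, A j k * (v ω j * w ω k)) P :=
  integrable_finsetSum _ fun j _ => integrable_finsetSum _ fun k _ =>
    (integrable_mul_of_memLp_two (hv j) (hw k)).const_mul _

theorem integral_sum_sum_mul {v : Ω → ι → ℝ} {w : Ω → κ → ℝ}
    (hv : ∀ j, MemLp (fun ω => v ω j) 2 P) (hw : ∀ k, MemLp (fun ω => w ω k) 2 P)
    (A : ι → κ → ℝ) :
    ∫ ω, ∑ j, ∑ k, A j k * (v ω j * w ω k) ∂P = ∑ j, ∑ k, A j k * ∫ ω, v ω j * w ω k ∂P := by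
  rw [integral_finsetSum _ fun j _ => integrable_finsetSum _ fun k _ =>
    (integrable_mul_of_memLp_two (hv j) (hw k)).const_mul _]
  refine Finset.sum_congr rfl fun j _ => ?_
  rw [integral_finsetSum _ fun k _ => (integrable_mul_of_memLp_two (hv j) (hw k)).const_mul _]
  simp only [integral_const_mul]

theorem integrable_dotProduct_mulVec {v : Ω → ι → ℝ} {w : Ω → κ → ℝ}
    (hv : ∀ j, MemLp (fun ω => v ω j) 2 P) (hw : ∀ k, MemLp (fun ω => w ω k) 2 P)
    (A : Matrix ι κ ℝ) : Integrable (fun ω => v ω ⬝ᵥ A *ᵥ w ω) P := by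
  simpa only [dotProduct_mulVec_eq_sum_sum] using integrable_sum_sum_mul hv hw A

variable [DecidableEq ι] {v w : Ω → ι → ℝ}

theorem integral_dotProduct_mulVec_of_cov_eq_smul_one (hv : ∀ j, MemLp (fun ω => v ω j) 2 P)
    (hw : ∀ k, MemLp (fun ω => w ω k) 2 P) {c : ℝ}
    (hcov : ∀ j k, ∫ ω, v ω j * w ω k ∂P = (c • (1 : Matrix ι ι ℝ)) j k) (A : Matrix ι ι ℝ) :
    ∫ ω, v ω ⬝ᵥ A *ᵥ w ω ∂P = c * trace A := by
  simp only [dotProduct_mulVec_eq_sum_sum]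
  rw [integral_sum_sum_mul hv hw A]
  simp [hcov, one_apply, trace, Finset.mul_sum, mul_comm]

theorem integral_mulVec_add_mulVec_dotProduct_self (hv : ∀ j, MemLp (fun ω => v ω j) 2 P)
    (hw : ∀ k, MemLp (fun ω => w ω k) 2 P) {a b c : ℝ}
    (hvv : ∀ j k, ∫ ω, v ω j * v ω k ∂P = (a • (1 : Matrix ι ι ℝ)) j k)
    (hvw : ∀ j k, ∫ ω, v ω j * w ω k ∂P = (b • (1 : Matrix ι ι ℝ)) j k)
    (hww : ∀ j k, ∫ ω, w ω j * w ω k ∂P = (c • (1 : Matrix ι ι ℝ)) j k) (Q S : Matrix κ ι ℝ) :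
    ∫ ω, (Q *ᵥ v ω + S *ᵥ w ω) ⬝ᵥ (Q *ᵥ v ω + S *ᵥ w ω) ∂P
      = a * trace (Qᵀ * Q) + 2 * b * trace (Qᵀ * S) + c * trace (Sᵀ * S) := by
  have hexpand : ∀ ω, (Q *ᵥ v ω + S *ᵥ w ω) ⬝ᵥ (Q *ᵥ v ω + S *ᵥ w ω)
      = v ω ⬝ᵥ (Qᵀ * Q) *ᵥ v ω + 2 * (v ω ⬝ᵥ (Qᵀ * S) *ᵥ w ω) + w ω ⬝ᵥ (Sᵀ * S) *ᵥ w ω := by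
    intro ω
    rw [add_dotProduct, dotProduct_add, dotProduct_add, dotProduct_comm (S *ᵥ w ω),
      mulVec_dotProduct_mulVec, mulVec_dotProduct_mulVec, mulVec_dotProduct_mulVec]
    ring
  have hQQ := integrable_dotProduct_mulVec hv hv (Qᵀ * Q)
  have hQS : Integrable (fun ω => 2 * (v ω ⬝ᵥ (Qᵀ * S) *ᵥ w ω)) P :=
    (integrable_dotProduct_mulVec hv hw _).const_mul 2
  have hSS := integrable_dotProduct_mulVec hw hw (Sᵀ * S)
  have hQQS : Integrable (fun ω => v ω ⬝ᵥ (Qᵀ * Q) *ᵥ v ω + 2 * (v ω ⬝ᵥ (Qᵀ * S) *ᵥ w ω)) P :=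
    hQQ.add hQS
  simp only [hexpand]
  rw [integral_add hQQS hSS, integral_add hQQ hQS, integral_const_mul,
    integral_dotProduct_mulVec_of_cov_eq_smul_one hv hv hvv,
    integral_dotProduct_mulVec_of_cov_eq_smul_one hv hw hvw,
    integral_dotProduct_mulVec_of_cov_eq_smul_one hw hw hww]
  ring

end SecondMoments

section RandomDesign

variable {Ω ι κ : Type*} [MeasurableSpace Ω] {P : Measure Ω} [Fintype κ]

theorem measurable_dotProduct_const (θ : κ → ℝ) : Measurable fun r : κ → ℝ => r ⬝ᵥ θ :=
  (continuous_id.dotProduct continuous_const).measurable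

theorem memLp_dotProduct_const {u : Ω → κ → ℝ} (hu : ∀ a, MemLp (fun ω => u ω a) 2 P)
    (θ : κ → ℝ) : MemLp (fun ω => u ω ⬝ᵥ θ) 2 P :=
  memLp_finsetSum _ fun a _ => (hu a).mul_const (θ a)

theorem integral_dotProduct_const_eq_zero {u : Ω → κ → ℝ}
    (hu : ∀ a, Integrable (fun ω => u ω a) P) (hmean : ∀ a, ∫ ω, u ω a ∂P = 0) (θ : κ → ℝ) :
    ∫ ω, u ω ⬝ᵥ θ ∂P = 0 := by
  simp only [dotProduct]
  rw [integral_finsetSum _ fun a _ => (hu a).mul_const (θ a)]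
  simp [integral_mul_const, hmean]

theorem integral_mul_eq_zero_of_indepFun {f g : Ω → ℝ} (hfg : IndepFun f g P)
    (hf : AEStronglyMeasurable f P) (hg : AEStronglyMeasurable g P) (hf0 : ∫ ω, f ω ∂P = 0) :
    ∫ ω, f ω * g ω ∂P = 0 := by
  simpa [hf0] using hfg.integral_mul_eq_mul_integral hf hg

variable [IsProbabilityMeasure P] [DecidableEq ι]

theorem integral_row_dotProduct_mul_row_dotProduct {U : Ω → ι → κ → ℝ} {S : Matrix κ κ ℝ}
    (hL2 : ∀ i a, MemLp (fun ω => U ω i a) 2 P) (hrow : iIndepFun (fun i ω => U ω i) P)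
    (hmean : ∀ i a, ∫ ω, U ω i a ∂P = 0) (hcov : ∀ i a b, ∫ ω, U ω i a * U ω i b ∂P = S a b)
    (θ : κ → ℝ) (j k : ι) :
    ∫ ω, (U ω j ⬝ᵥ θ) * (U ω k ⬝ᵥ θ) ∂P = ((θ ⬝ᵥ S *ᵥ θ) • (1 : Matrix ι ι ℝ)) j k := by
  by_cases hjk : j = k
  · subst hjk
    have hexpand : ∀ ω, (U ω j ⬝ᵥ θ) * (U ω j ⬝ᵥ θ)
        = ∑ a, ∑ b, θ a * θ b * (U ω j a * U ω j b) := fun ω => by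
      simp only [dotProduct, Finset.sum_mul_sum]
      exact Finset.sum_congr rfl fun a _ => Finset.sum_congr rfl fun b _ => by ring
    simp only [hexpand]
    rw [integral_sum_sum_mul (hL2 j) (hL2 j), dotProduct_mulVec_eq_sum_sum]
    simp [hcov, mul_comm]
  · have hindep : IndepFun (fun ω => U ω j ⬝ᵥ θ) (fun ω => U ω k ⬝ᵥ θ) P :=
      (hrow.indepFun hjk).comp (measurable_dotProduct_const θ) (measurable_dotProduct_const θ)
    rw [integral_mul_eq_zero_of_indepFun hindep
      (memLp_dotProduct_const (hL2 j) θ).aestronglyMeasurable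
      (memLp_dotProduct_const (hL2 k) θ).aestronglyMeasurable
      (integral_dotProduct_const_eq_zero (fun a => (hL2 j a).integrable one_le_two) (hmean j) θ)]
    simp [hjk]

theorem integral_noise_mul_noise [Fintype ι] {M : Type*} [DecidableEq M]
    {W : M → Ω → ι → κ → ℝ} {ε : M → Ω → ι → ℝ} {SigW : M → Matrix κ κ ℝ} {σ : M → M → ℝ}
    (hWL2 : ∀ m i a, MemLp (fun ω => W m ω i a) 2 P)
    (hWrowIndep : ∀ m, iIndepFun (fun i ω => W m ω i) P)
    (hWmean : ∀ m i a, ∫ ω, W m ω i a ∂P = 0)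
    (hWrowCov : ∀ m i a b, ∫ ω, W m ω i a * W m ω i b ∂P = SigW m a b)
    (hWindep : iIndepFun W P)
    (hWε : IndepFun (fun ω m => W m ω) (fun ω m => ε m ω) P)
    (hεL2 : ∀ m i, MemLp (fun ω => ε m ω i) 2 P)
    (hcov : ∀ m m' i j, ∫ ω, ε m ω i * ε m' ω j ∂P = (σ m m' • (1 : Matrix ι ι ℝ)) i j)
    (θ : M → κ → ℝ) (m m' : M) (j k : ι) :
    ∫ ω, (of (W m ω) *ᵥ θ m + ε m ω) j * (of (W m' ω) *ᵥ θ m' + ε m' ω) k ∂P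
      = ((σ m m' + if m = m' then θ m ⬝ᵥ SigW m *ᵥ θ m else 0) • (1 : Matrix ι ι ℝ)) j k := by
  have hrowL2 : ∀ m i, MemLp (fun ω => W m ω i ⬝ᵥ θ m) 2 P :=
    fun m i => memLp_dotProduct_const (hWL2 m i) (θ m)
  have hrowMean : ∀ m i, ∫ ω, W m ω i ⬝ᵥ θ m ∂P = 0 := fun m i =>
    integral_dotProduct_const_eq_zero (fun a => (hWL2 m i a).integrable one_le_two) (hWmean m i) _
  have hWW : ∫ ω, (W m ω j ⬝ᵥ θ m) * (W m' ω k ⬝ᵥ θ m') ∂P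
      = ((if m = m' then θ m ⬝ᵥ SigW m *ᵥ θ m else 0) • (1 : Matrix ι ι ℝ)) j k := by
    by_cases hmm : m = m'
    · subst hmm
      simpa using integral_row_dotProduct_mul_row_dotProduct (hWL2 m) (hWrowIndep m) (hWmean m)
        (hWrowCov m) (θ m) j k
    · have hindep : IndepFun (fun ω => W m ω j ⬝ᵥ θ m) (fun ω => W m' ω k ⬝ᵥ θ m') P :=
        (hWindep.indepFun hmm).comp
          ((measurable_dotProduct_const _).comp (measurable_pi_apply j))
          ((measurable_dotProduct_const _).comp (measurable_pi_apply k))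
      rw [integral_mul_eq_zero_of_indepFun hindep (hrowL2 m j).aestronglyMeasurable
        (hrowL2 m' k).aestronglyMeasurable (hrowMean m j)]
      simp [hmm]
  have hWε_zero : ∀ m m' j k, ∫ ω, (W m ω j ⬝ᵥ θ m) * ε m' ω k ∂P = 0 := by
    intro m m' j k
    have hφ : Measurable fun w : M → ι → κ → ℝ => w m j ⬝ᵥ θ m :=
      (measurable_dotProduct_const (θ m)).comp
        ((measurable_pi_apply j).comp (measurable_pi_apply m))
    have hψ : Measurable fun e : M → ι → ℝ => e m' k :=
      (measurable_pi_apply k).comp (measurable_pi_apply m')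
    have hindep : IndepFun (fun ω => W m ω j ⬝ᵥ θ m) (fun ω => ε m' ω k) P := hWε.comp hφ hψ
    exact integral_mul_eq_zero_of_indepFun hindep (hrowL2 m j).aestronglyMeasurable
      (hεL2 m' k).aestronglyMeasurable (hrowMean m j)
  have hmulVec_apply : ∀ m ω i, (of (W m ω) *ᵥ θ m) i = W m ω i ⬝ᵥ θ m := fun _ _ _ => rfl
  simp only [Pi.add_apply, hmulVec_apply]
  have hεW_zero : ∫ ω, ε m ω j * (W m' ω k ⬝ᵥ θ m') ∂P = 0 := by
    simpa only [mul_comm] using hWε_zero m' m k j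
  rw [integral_add_mul_add (hrowL2 m j) (hεL2 m j) (hrowL2 m' k) (hεL2 m' k), hWW,
    hWε_zero, hεW_zero, hcov, add_smul, Matrix.add_apply]
  ring

end RandomDesign

theorem training_error_difference_scalar_cov_general {n p : ℕ}
    {Ω : Type*} [MeasurableSpace Ω] (P : Measure Ω) [IsProbabilityMeasure P]
    (X : Fin 2 → Matrix (Fin n) (Fin p) ℝ)
    (hXm : ∀ m, IsUnit ((X m)ᵀ * X m))
    (hX : IsUnit ((fromCols (X 0) (X 1))ᵀ * fromCols (X 0) (X 1)))
    (β θ : Fin 2 → Fin p → ℝ)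
    (W : Fin 2 → Ω → Fin n → Fin p → ℝ)
    (ε : Fin 2 → Ω → Fin n → ℝ)
    (σ : Fin 2 → Fin 2 → ℝ)
    (SigW : Fin 2 → Matrix (Fin p) (Fin p) ℝ)
    (hWL2 : ∀ m i j, MemLp (fun ω => W m ω i j) 2 P)
    (hWrowIndep : ∀ m, iIndepFun
      (fun i : Fin n => fun ω => W m ω i) P)
    (hWmean : ∀ m i j, ∫ ω, W m ω i j ∂P = 0)
    (hWrowCov : ∀ m i a b, ∫ ω, W m ω i a * W m ω i b ∂P = SigW m a b)
    (hWindep : iIndepFun W P)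
    (hWε : IndepFun (fun ω => fun m => W m ω) (fun ω => fun m => ε m ω) P)
    (hεL2 : ∀ m i, MemLp (fun ω => ε m ω i) 2 P)
    (hcov : ∀ m m' i j, ∫ ω, ε m ω i * ε m' ω j ∂P =
      (σ m m' • (1 : Matrix (Fin n) (Fin n) ℝ)) i j) :
    let y : Fin 2 → Ω → Fin n → ℝ :=
      fun m ω => (X m).mulVec (β m) + (Matrix.of (W m ω)).mulVec (θ m) + ε m ω
    let H := hatMat (fromCols (X 0) (X 1))
    let H₁ := hatMat (X 0)
    let H₂ := hatMat (X 1)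
    let yhat : Ω → Fin n → ℝ := fun ω => H.mulVec (y 0 ω + y 1 ω)
    let yhatStar : Ω → Fin n → ℝ := fun ω => H₁.mulVec (y 0 ω) + H₂.mulVec (y 1 ω)
    (∫ ω, ((y 0 ω + y 1 ω) - yhat ω) ⬝ᵥ ((y 0 ω + y 1 ω) - yhat ω) ∂P)
      - (∫ ω, ((y 0 ω + y 1 ω) - yhatStar ω) ⬝ᵥ ((y 0 ω + y 1 ω) - yhatStar ω) ∂P)
      = -(p : ℝ) * σ 0 0 - (p : ℝ) * σ 1 1
        - 2 * σ 0 1 * Matrix.trace (H₁ * H₂)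
        - (p : ℝ) * (θ 0 ⬝ᵥ (SigW 0).mulVec (θ 0))
        - (p : ℝ) * (θ 1 ⬝ᵥ (SigW 1).mulVec (θ 1)) := by
  intro y H H₁ H₂ yhat yhatStar
  set v : Fin 2 → Ω → Fin n → ℝ := fun m ω => of (W m ω) *ᵥ θ m + ε m ω
  have hy : ∀ m ω, y m ω = X m *ᵥ β m + v m ω := fun m ω => add_assoc _ _ _
  have hvL2 : ∀ m j, MemLp (fun ω => v m ω j) 2 P := fun m j =>
    (memLp_dotProduct_const (hWL2 m j) (θ m)).add (hεL2 m j)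
  have hvcov := integral_noise_mul_noise hWL2 hWrowIndep hWmean hWrowCov hWindep hWε hεL2 hcov θ
  have hres : ∀ ω, y 0 ω + y 1 ω - yhat ω = (1 - H) *ᵥ v 0 ω + (1 - H) *ᵥ v 1 ω := by
    intro ω
    have hsum : y 0 ω + y 1 ω
        = fromCols (X 0) (X 1) *ᵥ Sum.elim (β 0) (β 1) + (v 0 ω + v 1 ω) := by
      rw [fromCols_mulVec, hy, hy, Sum.elim_comp_inl, Sum.elim_comp_inr]
      abel
    rw [← mulVec_add, ← one_sub_hatMat_mulVec_add hX, ← hsum, sub_mulVec, one_mulVec]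
  have hresStar : ∀ ω, y 0 ω + y 1 ω - yhatStar ω = (1 - H₁) *ᵥ v 0 ω + (1 - H₂) *ᵥ v 1 ω := by
    intro ω
    show y 0 ω + y 1 ω - (H₁ *ᵥ y 0 ω + H₂ *ᵥ y 1 ω) = _
    rw [← one_sub_hatMat_mulVec_add (hXm 0) (β 0), ← one_sub_hatMat_mulVec_add (hXm 1) (β 1),
      ← hy, ← hy, sub_mulVec, sub_mulVec, one_mulVec, one_mulVec]
    abel
  have hvv : ∀ m, ∀ j k, ∫ ω, v m ω j * v m ω k ∂P
      = ((σ m m + θ m ⬝ᵥ SigW m *ᵥ θ m) • (1 : Matrix (Fin n) (Fin n) ℝ)) j k := fun m j k => by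
    simpa only [if_true, eq_self] using hvcov m m j k
  have hv01 : ∀ j k, ∫ ω, v 0 ω j * v 1 ω k ∂P = (σ 0 1 • (1 : Matrix (Fin n) (Fin n) ℝ)) j k :=
    fun j k => by simpa only [if_neg zero_ne_one, add_zero] using hvcov 0 1 j k
  simp only [hres, hresStar]
  rw [integral_mulVec_add_mulVec_dotProduct_self (hvL2 0) (hvL2 1) (hvv 0) hv01 (hvv 1),
    integral_mulVec_add_mulVec_dotProduct_self (hvL2 0) (hvL2 1) (hvv 0) hv01 (hvv 1)]
  simp only [trace_one_sub_transpose_mul_one_sub (hatMat_transpose _), H, H₁, H₂,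
    hatMat_mul_hatMat hX, hatMat_mul_hatMat (hXm 0), hatMat_mul_hatMat (hXm 1), trace_hatMat hX,
    trace_hatMat (hXm 0), trace_hatMat (hXm 1), Fintype.card_sum, Fintype.card_fin]
  push_cast
  ring

/-- **Eq. (Prop_trainingerrorExpectation).** In the setting of Proposition 2, if moreover
`Σ_{mm'} = σ_{mm'} I`, then the expected training-error difference between AVR and IR is
`−pσ₁₁ − pσ₂₂ − 2σ₁₂ Tr(H₁H₂) − pθ₁ᵀΣ_{W₁}θ₁ − pθ₂ᵀΣ_{W₂}θ₂`. -/
theorem training_error_difference_scalar_cov {n p : ℕ}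
    {Ω : Type*} [MeasurableSpace Ω] (P : Measure Ω) [IsProbabilityMeasure P]
    (X : Fin 2 → Matrix (Fin n) (Fin p) ℝ)
    (hXm : ∀ m, IsUnit ((X m)ᵀ * X m))
    (hX : IsUnit ((fromCols (X 0) (X 1))ᵀ * fromCols (X 0) (X 1)))
    (β θ : Fin 2 → Fin p → ℝ)
    (W : Fin 2 → Ω → Fin n → Fin p → ℝ)
    (ε : Fin 2 → Ω → Fin n → ℝ)
    (σ : Fin 2 → Fin 2 → ℝ)
    (SigW : Fin 2 → Matrix (Fin p) (Fin p) ℝ)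
    (hWL2 : ∀ m i j, MemLp (fun ω => W m ω i j) 2 P)
    (hWrowIndep : ∀ m, iIndepFun
      (fun i : Fin n => fun ω => W m ω i) P)
    (hWmean : ∀ m i j, ∫ ω, W m ω i j ∂P = 0)
    (hWrowCov : ∀ m i a b, ∫ ω, W m ω i a * W m ω i b ∂P = SigW m a b)
    (hWindep : iIndepFun W P)
    (hWε : IndepFun (fun ω => fun m => W m ω) (fun ω => fun m => ε m ω) P)
    (hεL2 : ∀ m i, MemLp (fun ω => ε m ω i) 2 P)
    (hεmean : ∀ m i, ∫ ω, ε m ω i ∂P = 0)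
    (hcov : ∀ m m' i j, ∫ ω, ε m ω i * ε m' ω j ∂P =
      (σ m m' • (1 : Matrix (Fin n) (Fin n) ℝ)) i j) :
    let y : Fin 2 → Ω → Fin n → ℝ :=
      fun m ω => (X m).mulVec (β m) + (Matrix.of (W m ω)).mulVec (θ m) + ε m ω
    let H := hatMat (fromCols (X 0) (X 1))
    let H₁ := hatMat (X 0)
    let H₂ := hatMat (X 1)
    let yhat : Ω → Fin n → ℝ := fun ω => H.mulVec (y 0 ω + y 1 ω)
    let yhatStar : Ω → Fin n → ℝ := fun ω => H₁.mulVec (y 0 ω) + H₂.mulVec (y 1 ω)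
    (∫ ω, ((y 0 ω + y 1 ω) - yhat ω) ⬝ᵥ ((y 0 ω + y 1 ω) - yhat ω) ∂P)
      - (∫ ω, ((y 0 ω + y 1 ω) - yhatStar ω) ⬝ᵥ ((y 0 ω + y 1 ω) - yhatStar ω) ∂P)
      = -(p : ℝ) * σ 0 0 - (p : ℝ) * σ 1 1
        - 2 * σ 0 1 * Matrix.trace (H₁ * H₂)
        - (p : ℝ) * (θ 0 ⬝ᵥ (SigW 0).mulVec (θ 0))
        - (p : ℝ) * (θ 1 ⬝ᵥ (SigW 1).mulVec (θ 1)) :=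
  training_error_difference_scalar_cov_general P X hXm hX β θ W ε σ SigW hWL2 hWrowIndep hWmean
    hWrowCov hWindep hWε hεL2 hcov
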